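/- arXiv:1008.1498 — 5 statements merged into one kernel-verified Lean document; each statement's English description precedes it below -/
import Mathlib

section
/- Let A be an m×n matrix over ℚ with m ≥ n such that every square submatrix of A is nonsingular (i.e., for every k ≥ 1 and every choice of row indices R and column indices C with |R| = |C| = k, the k×k submatrix A(R,C) is invertible). Then A has rank n, and A is completely unsparsifiable: for every invertible n×n matrix X over ℚ, nnz(AX) ≥ (m−n+1)·n. -/
/-!
If every maximal square submatrix of `A` is nonsingular, then for `v ≠ 0` the vector `A v` has
fewer than `n` zero entries: `n` zero entries would single out an `n × n` submatrix killing `v`.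
Each column of `A X` is `A` applied to a column of `X`, which is nonzero when `X` is invertible,
so every column of `A X` has at least `m - n + 1` nonzero entries. The rank is `n` because `A`
contains a nonsingular `n × n` submatrix.
-/

/-- Number of nonzero entries of a matrix. -/
def nnz {m n : ℕ} (A : Matrix (Fin m) (Fin n) ℚ) : ℕ :=
  Finset.card (Finset.univ.filter fun p : Fin m × Fin n => A p.1 p.2 ≠ 0)

open Finset Matrix

namespace Matrix

variable {K m ι : Type*} [Fintype m] [Fintype ι] [DecidableEq ι]

theorem card_filter_mulVec_eq_zero_lt [CommRing K] [DecidableEq K] {A : Matrix m ι K}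
    (hA : ∀ r : ι → m, Function.Injective r → IsUnit (A.submatrix r id).det)
    {v : ι → K} (hv : v ≠ 0) :
    #{i | (A *ᵥ v) i = 0} < Fintype.card ι := by
  by_contra! h
  rw [← Fintype.card_subtype] at h
  obtain ⟨e⟩ := Function.Embedding.nonempty_of_card_le h
  have hzero : A.submatrix (Subtype.val ∘ e) id *ᵥ v = 0 := funext fun i => (e i).2
  exact hv <| eq_zero_of_det_mem_nonZeroDivisors_of_mulVec_eq_zero
    (hA _ (Subtype.val_injective.comp e.injective)).mem_nonZeroDivisors hzero

theorem card_lt_card_filter_mulVec_ne_zero_add_card [CommRing K] [DecidableEq K]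
    {A : Matrix m ι K}
    (hA : ∀ r : ι → m, Function.Injective r → IsUnit (A.submatrix r id).det)
    {v : ι → K} (hv : v ≠ 0) :
    Fintype.card m < #{i | (A *ᵥ v) i ≠ 0} + Fintype.card ι := by
  have hsplit := card_filter_add_card_filter_not (s := univ) fun i => (A *ᵥ v) i = 0
  have hzeros := card_filter_mulVec_eq_zero_lt hA hv
  simp only [card_univ, ne_eq] at *
  omega

theorem rank_eq_card_width_of_isUnit_det_submatrix [CommRing K] [Nontrivial K]
    {A : Matrix m ι K} (hmι : Fintype.card ι ≤ Fintype.card m)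
    (hA : ∀ r : ι → m, Function.Injective r → IsUnit (A.submatrix r id).det) :
    A.rank = Fintype.card ι := by
  obtain ⟨r⟩ := Function.Embedding.nonempty_of_card_le hmι
  refine A.rank_le_card_width.antisymm ?_
  calc Fintype.card ι = (A.submatrix r id).rank :=
        (rank_of_isUnit _ ((isUnit_iff_isUnit_det _).mpr (hA r r.injective))).symm
    _ ≤ A.rank := rank_submatrix_le A r id

theorem transpose_apply_ne_zero_of_isUnit_det [CommRing K] [Nontrivial K] {X : Matrix ι ι K}
    (hX : IsUnit X.det) (j : ι) : Xᵀ j ≠ 0 := fun h =>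
  hX.ne_zero (det_eq_zero_of_column_eq_zero j fun i => congrFun h i)

end Matrix

theorem nnz_eq_sum_card_filter_ne_zero {m n : ℕ} (B : Matrix (Fin m) (Fin n) ℚ) :
    nnz B = ∑ j, #{i | B i j ≠ 0} := by
  rw [nnz, card_filter, Fintype.sum_prod_type, sum_comm]
  simp only [card_filter]

/-- If every square submatrix of the m×n rational matrix `A` (with m ≥ n) is
nonsingular, then `A` has rank `n` and is completely unsparsifiable:
`nnz (A * X) ≥ (m - n + 1) * n` for every invertible `X`. -/
theorem matrix_unsparsifiable (m n : ℕ) (hmn : n ≤ m)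
    (A : Matrix (Fin m) (Fin n) ℚ)
    (hsub : ∀ k : ℕ, 1 ≤ k → ∀ (r : Fin k → Fin m) (c : Fin k → Fin n),
      Function.Injective r → Function.Injective c →
      IsUnit (A.submatrix r c).det) :
    A.rank = n ∧
      ∀ X : Matrix (Fin n) (Fin n) ℚ, IsUnit X.det →
        (m - n + 1) * n ≤ nnz (A * X) := by
  have hA : ∀ r : Fin n → Fin m, Function.Injective r → IsUnit (A.submatrix r id).det := by
    intro r hr
    rcases Nat.eq_zero_or_pos n with rfl | hn
    · simp
    · exact hsub n hn r id hr Function.injective_id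
  refine ⟨by simpa using rank_eq_card_width_of_isUnit_det_submatrix (by simpa) hA, fun X hX => ?_⟩
  have hcol (j : Fin n) : m - n + 1 ≤ #{i | (A * X) i j ≠ 0} := by
    have := card_lt_card_filter_mulVec_ne_zero_add_card hA
      (transpose_apply_ne_zero_of_isUnit_det hX j)
    simp only [Fintype.card_fin] at this
    change m - n + 1 ≤ #{i | (A *ᵥ Xᵀ j) i ≠ 0}
    omega
  calc (m - n + 1) * n = ∑ _j : Fin n, (m - n + 1) := by simp [mul_comm]
    _ ≤ ∑ j, #{i | (A * X) i j ≠ 0} := sum_le_sum fun j _ => hcol j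
    _ = nnz (A * X) := (nnz_eq_sum_card_filter_ne_zero _).symm
end

section
/- An m×n matrix A over ℚ with columns a₁,…,aₙ is optimally sparse if and only if for every nonzero vector x ∈ ℚⁿ one has ||Ax||₀ ≥ max over i ∈ supp(x) of ||aᵢ||₀. -/
/-- Number of nonzero entries of a vector (the ℓ₀ quasi-norm). -/
def l0 {n : ℕ} (x : Fin n → ℚ) : ℕ :=
  Finset.card (Finset.univ.filter fun i => x i ≠ 0)

/-- A matrix `A` is optimally sparse iff `nnz (A * X) ≥ nnz A` for every
invertible `X`. -/
def OptimallySparse {m n : ℕ} (A : Matrix (Fin m) (Fin n) ℚ) : Prop :=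
  ∀ X : Matrix (Fin n) (Fin n) ℚ, IsUnit X.det → nnz A ≤ nnz (A * X)

/-!
Since `nnz` is the sum of the `ℓ₀` sizes of the columns, and column `j` of `A * X` is
`A *ᵥ X.col j`, the two directions are:

* (⇒) For `x i ≠ 0`, the identity matrix with column `i` replaced by `x` is invertible;
  multiplying by it replaces column `i` of `A` by `A *ᵥ x` and leaves the others alone.
* (⇐) An invertible `X` has a nonzero term in the Leibniz expansion of its determinant, i.e. a
  permutation `σ` with `X (σ j) j ≠ 0` for all `j`; the hypothesis applied to `x = X.col j` and
  `i = σ j` bounds the columns of `A * X` from below by those of `A`, reordered by `σ`.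
-/

open Matrix

theorem Matrix.exists_perm_forall_ne_zero_of_det_ne_zero {n R : Type*} [Fintype n]
    [DecidableEq n] [CommRing R] {M : Matrix n n R} (h : M.det ≠ 0) :
    ∃ σ : Equiv.Perm n, ∀ j, M (σ j) j ≠ 0 := by
  rw [det_apply] at h
  obtain ⟨σ, -, hσ⟩ := Finset.exists_ne_zero_of_sum_ne_zero h
  refine ⟨σ, fun j hj => hσ ?_⟩
  rw [Finset.prod_eq_zero (f := fun i => M (σ i) i) (Finset.mem_univ j) hj, smul_zero]

theorem Matrix.det_one_updateCol {n R : Type*} [Fintype n] [DecidableEq n] [CommRing R]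
    (i : n) (x : n → R) : ((1 : Matrix n n R).updateCol i x).det = x i := by
  rw [← cramer_apply, cramer_one, Module.End.one_apply]

theorem Matrix.col_mul_eq_mulVec {l m n R : Type*} [Fintype m] [NonUnitalNonAssocSemiring R]
    (A : Matrix l m R) (B : Matrix m n R) (j : n) :
    (A * B).col j = A *ᵥ B.col j := by
  ext
  simp only [col_apply, mul_apply, mulVec, dotProduct]

theorem nnz_eq_sum_l0_col {m n : ℕ} (A : Matrix (Fin m) (Fin n) ℚ) :
    nnz A = ∑ j, l0 (A.col j) := by
  simp only [nnz, l0, Finset.card_filter]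
  rw [Fintype.sum_prod_type, Finset.sum_comm]
  rfl

theorem nnz_updateCol_add_l0_col {m n : ℕ} (A : Matrix (Fin m) (Fin n) ℚ) (i : Fin n)
    (v : Fin m → ℚ) : nnz (A.updateCol i v) + l0 (A.col i) = nnz A + l0 v := by
  have hcol : (A.updateCol i v).col = Function.update A.col i v := by
    ext j k
    rcases eq_or_ne j i with rfl | hj <;> simp [*]
  rw [nnz_eq_sum_l0_col, nnz_eq_sum_l0_col, hcol, ← Function.comp_def l0,
    Function.comp_update, Finset.sum_update_of_mem (Finset.mem_univ i),
    Fintype.sum_eq_add_sum_compl i (fun j => l0 (A.col j)), Finset.compl_eq_univ_sdiff]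
  simp only [Function.comp_apply]
  ring

theorem OptimallySparse.l0_col_le_l0_mulVec {m n : ℕ} {A : Matrix (Fin m) (Fin n) ℚ}
    (hA : OptimallySparse A) {x : Fin n → ℚ} {i : Fin n} (hxi : x i ≠ 0) :
    l0 (A.col i) ≤ l0 (A *ᵥ x) := by
  have hX : IsUnit ((1 : Matrix (Fin n) (Fin n) ℚ).updateCol i x).det := by
    rw [det_one_updateCol]
    exact hxi.isUnit
  have hle := hA _ hX
  rw [mul_updateCol, Matrix.mul_one] at hle
  have := nnz_updateCol_add_l0_col A i (A *ᵥ x)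
  omega

theorem optimallySparse_of_l0_col_le_l0_mulVec {m n : ℕ} {A : Matrix (Fin m) (Fin n) ℚ}
    (h : ∀ (x : Fin n → ℚ) (i : Fin n), x i ≠ 0 → l0 (A.col i) ≤ l0 (A *ᵥ x)) :
    OptimallySparse A := by
  intro X hX
  obtain ⟨σ, hσ⟩ := exists_perm_forall_ne_zero_of_det_ne_zero hX.ne_zero
  rw [nnz_eq_sum_l0_col, nnz_eq_sum_l0_col, ← Equiv.sum_comp σ]
  gcongr with j
  rw [col_mul_eq_mulVec]
  exact h _ _ (hσ j)

/-- An m×n rational matrix `A` is optimally sparse if and only if for every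
nonzero vector `x`, `‖Ax‖₀ ≥ max_{i ∈ supp x} ‖aᵢ‖₀` (where `aᵢ` are the
columns of `A`). -/
theorem optimally_sparse_iff (m n : ℕ) (A : Matrix (Fin m) (Fin n) ℚ) :
    OptimallySparse A ↔
      ∀ x : Fin n → ℚ, x ≠ 0 →
        ∀ i : Fin n, x i ≠ 0 → l0 (fun k => A k i) ≤ l0 (A.mulVec x) := by
  refine ⟨fun hA x _ i hxi => hA.l0_col_le_l0_mulVec hxi, fun h => ?_⟩
  refine optimallySparse_of_l0_col_le_l0_mulVec fun x i hxi => h x ?_ i hxi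
  rintro rfl
  exact hxi rfl
end

section
/- Let A be an m×n matrix over ℚ. For any nonzero vector x ∈ ℚⁿ and any index i ∈ supp(x), there exist a row set R ⊆ {1,…,m} and a column set C ⊆ {1,…,n} such that A(R,C) is a candidate submatrix of A, |R| ≥ m − ||Ax||₀, and i ∈ C ⊆ supp(x). -/
/-- The submatrix `A(R,C)` is row-inclusive: for every row index `r ∉ R`,
the row `A({r},C)` does not lie in the row span of `A(R,C)`. -/
def RowInclusive {m n : ℕ} (A : Matrix (Fin m) (Fin n) ℚ)
    (R : Finset (Fin m)) (C : Finset (Fin n)) : Prop :=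
  ∀ r : Fin m, r ∉ R →
    (fun j : {x // x ∈ C} => A r j) ∉
      Submodule.span ℚ
        (Set.range fun i : {x // x ∈ R} => fun j : {x // x ∈ C} => A i j)

/-- `A(R,C)` is a candidate submatrix of `A`: it is row-inclusive and
`rank A(R,C) = |C| - 1`. -/
def CandidateSubmatrix {m n : ℕ} (A : Matrix (Fin m) (Fin n) ℚ)
    (R : Finset (Fin m)) (C : Finset (Fin n)) : Prop :=
  RowInclusive A R C ∧
    (A.submatrix (fun i : {x // x ∈ R} => (i : Fin m))
        (fun j : {x // x ∈ C} => (j : Fin n))).rank + 1 = C.card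


/-! On the rows `R₀` where `Ax` vanishes, the columns of `A` indexed by `supp x` are dependent with
coefficients `x`, so column `i` lies in the span of the other support columns. Taking a linearly
independent set `t` of those columns with the same span, `C = {i} ∪ t` gives a submatrix
`A(R₀, C)` of rank `|C| - 1`. Enlarging `R₀` by every row whose restriction to `C` lies in the row
span of `A(R₀, C)` makes the submatrix row-inclusive without changing that span, hence the rank. -/

open Matrix Module Submodule

section ColumnCircuit

variable {K m' n' : Type*} [Field K]

theorem Matrix.col_mem_span_col_image_of_mulVec_eq_zero [Fintype n'] [DecidableEq n']
    {B : Matrix m' n' K} {x : n' → K} (hBx : B *ᵥ x = 0) {i : n'} (hi : x i ≠ 0) :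
    B.col i ∈ span K (B.col '' (Function.support x \ {i})) := by
  have hsum : x i • B.col i + ∑ j ∈ Finset.univ.erase i, x j • B.col j = 0 := by
    rw [Finset.add_sum_erase _ (fun j => x j • B.col j) (Finset.mem_univ i), ← hBx]
    ext r
    simp [mulVec, dotProduct, Finset.sum_apply, mul_comm]
  rw [← inv_smul_smul₀ hi (B.col i), eq_neg_of_add_eq_zero_left hsum, smul_neg]
  refine neg_mem (smul_mem _ _ (sum_mem fun j hj => ?_))
  by_cases hxj : x j = 0
  · simp [hxj]
  · exact smul_mem _ _ (subset_span ⟨j, ⟨hxj, Finset.ne_of_mem_erase hj⟩, rfl⟩)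

theorem Matrix.rank_submatrix_col_eq_finrank_span [Fintype m'] (B : Matrix m' n' K)
    (C : Finset n') :
    (B.submatrix id ((↑) : C → n')).rank = finrank K (span K (B.col '' C)) := by
  rw [rank_eq_finrank_span_cols, Set.image_eq_range]
  rfl

theorem Matrix.exists_rank_submatrix_col_add_one_eq_card [Fintype m'] [Fintype n']
    {B : Matrix m' n' K} {x : n' → K} (hBx : B *ᵥ x = 0) {i : n'} (hi : x i ≠ 0) :
    ∃ C : Finset n', i ∈ C ∧ ↑C ⊆ Function.support x ∧
      (B.submatrix id ((↑) : C → n')).rank + 1 = C.card := by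
  classical
  obtain ⟨t, hts, -, hspan, hindep⟩ :=
    exists_linearIndepOn_extension (linearIndepOn_empty K B.col)
      (Set.empty_subset (Function.support x \ {i}))
  have hit : i ∉ t.toFinset := fun h => (Set.mem_toFinset.1 h |> hts).2 rfl
  have hspan_t : B.col i ∈ span K (B.col '' t) :=
    span_le.2 hspan (col_mem_span_col_image_of_mulVec_eq_zero hBx hi)
  refine ⟨insert i t.toFinset, Finset.mem_insert_self _ _, ?_, ?_⟩
  · rw [Finset.coe_insert, Set.coe_toFinset, Set.insert_subset_iff]
    exact ⟨hi, hts.trans Set.sdiff_subset⟩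
  · rw [rank_submatrix_col_eq_finrank_span, Finset.coe_insert, Set.coe_toFinset,
      Set.image_insert_eq, span_insert_eq_span hspan_t, Finset.card_insert_of_notMem hit,
      Set.image_eq_range, finrank_span_eq_card hindep, Set.toFinset_card]

end ColumnCircuit

theorem exists_rowInclusive_superset_rank_eq {m n : ℕ} (A : Matrix (Fin m) (Fin n) ℚ)
    (R₀ : Finset (Fin m)) (C : Finset (Fin n)) :
    ∃ R : Finset (Fin m), R₀ ⊆ R ∧ RowInclusive A R C ∧
      (A.submatrix ((↑) : R → Fin m) ((↑) : C → Fin n)).rank =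
        (A.submatrix ((↑) : R₀ → Fin m) ((↑) : C → Fin n)).rank := by
  classical
  let rowC (r : Fin m) : C → ℚ := fun j => A r j
  let W := span ℚ (Set.range fun r : R₀ => rowC r)
  let R := Finset.univ.filter (rowC · ∈ W)
  have hR₀R : R₀ ⊆ R := fun r hr =>
    Finset.mem_filter.2 ⟨Finset.mem_univ r, subset_span ⟨⟨r, hr⟩, rfl⟩⟩
  have hspan : span ℚ (Set.range fun r : R => rowC r) = W := by
    refine le_antisymm (span_le.2 ?_) (span_mono ?_)
    · rintro - ⟨r, rfl⟩
      exact (Finset.mem_filter.1 r.2).2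
    · rintro - ⟨r, rfl⟩
      exact ⟨⟨r, hR₀R r.2⟩, rfl⟩
  refine ⟨R, hR₀R, fun r hr hrW => hr ?_, ?_⟩
  · exact Finset.mem_filter.2 ⟨Finset.mem_univ r, hspan ▸ hrW⟩
  · rw [rank_eq_finrank_span_row, rank_eq_finrank_span_row]
    exact congrArg (fun U : Submodule ℚ (C → ℚ) => finrank ℚ U) hspan

theorem card_filter_eq_zero_add_l0 {m : ℕ} (y : Fin m → ℚ) :
    (Finset.univ.filter fun r => y r = 0).card + l0 y = m := by
  rw [l0, Finset.card_filter_add_card_filter_not, Finset.card_univ, Fintype.card_fin]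

theorem candidate_submatrix_exists_general (m n : ℕ) (A : Matrix (Fin m) (Fin n) ℚ)
    (x : Fin n → ℚ) (i : Fin n) (hi : x i ≠ 0) :
    ∃ (R : Finset (Fin m)) (C : Finset (Fin n)),
      CandidateSubmatrix A R C ∧
      m - l0 (A.mulVec x) ≤ R.card ∧
      i ∈ C ∧ ∀ j ∈ C, x j ≠ 0 := by
  classical
  let R₀ := Finset.univ.filter fun r => (A *ᵥ x) r = 0
  have hR₀x : A.submatrix ((↑) : R₀ → Fin m) id *ᵥ x = 0 := by
    ext r
    exact (Finset.mem_filter.1 r.2).2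
  obtain ⟨C, hiC, hCx, hrank⟩ := exists_rank_submatrix_col_add_one_eq_card hR₀x hi
  obtain ⟨R, hR₀R, hincl, hrankR⟩ := exists_rowInclusive_superset_rank_eq A R₀ C
  refine ⟨R, C, ⟨hincl, hrankR ▸ hrank⟩, ?_, hiC, fun j hj => hCx hj⟩
  have hcount : R₀.card + l0 (A *ᵥ x) = m := card_filter_eq_zero_add_l0 (A *ᵥ x)
  have hR₀_le_R := Finset.card_le_card hR₀R
  omega

/-- For any nonzero `x` and `i ∈ supp x`, there is a candidate submatrix
`A(R,C)` of `A` with `|R| ≥ m - ‖Ax‖₀` and `i ∈ C ⊆ supp x`. -/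
theorem candidate_submatrix_exists (m n : ℕ) (A : Matrix (Fin m) (Fin n) ℚ)
    (x : Fin n → ℚ) (hx : x ≠ 0) (i : Fin n) (hi : x i ≠ 0) :
    ∃ (R : Finset (Fin m)) (C : Finset (Fin n)),
      CandidateSubmatrix A R C ∧
      m - l0 (A.mulVec x) ≤ R.card ∧
      i ∈ C ∧ ∀ j ∈ C, x j ≠ 0 :=
  candidate_submatrix_exists_general m n A x i hi
end

section
/- Let p₁, p₂, …, pₙ be distinct positive real numbers and let M be the n×n real matrix with entries M_{ij} = i^{p_j} (for 1 ≤ i,j ≤ n). Then every square submatrix of M is nonsingular: for every k ≥ 1 and every choice of row indices R ⊆ {1,…,n} and column indices C ⊆ {1,…,n} with |R| = |C| = k, the submatrix M(R,C) is invertible. -/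
/-!
A vanishing square submatrix would give a nontrivial generalized polynomial
`f t = ∑ j, a j * t ^ q j` with `k` distinct real exponents and `k` distinct positive zeros.
Dividing by `t ^ q 0` makes one exponent zero without moving the zeros; by Rolle's theorem the
derivative then has `k - 1` distinct positive zeros and only `k - 1` exponents, so induction
on `k` forces all coefficients to vanish.
-/

open Function

theorem exists_strictMono_deriv_eq_zero {k : ℕ} {f f' : ℝ → ℝ} {x : Fin (k + 1) → ℝ}
    (hx : StrictMono x) (hf : ∀ t, x 0 ≤ t → HasDerivAt f (f' t) t) (hfx : ∀ i, f (x i) = 0) :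
    ∃ y : Fin k → ℝ, StrictMono y ∧ (∀ i, x 0 < y i) ∧ ∀ i, f' (y i) = 0 := by
  have hx0 : ∀ i, x 0 ≤ x i := fun i => hx.monotone (Fin.zero_le i)
  have rolle : ∀ i : Fin k, ∃ y ∈ Set.Ioo (x i.castSucc) (x i.succ), f' y = 0 := fun i =>
    exists_hasDerivAt_eq_zero (hx Fin.castSucc_lt_succ)
      (fun t ht => (hf t ((hx0 _).trans ht.1)).continuousAt.continuousWithinAt)
      ((hfx _).trans (hfx _).symm) (fun t ht => hf t ((hx0 _).trans ht.1.le))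
  choose y hy hy' using rolle
  refine ⟨y, fun i i' hii' => ?_, fun i => (hx0 _).trans_lt (hy i).1, hy'⟩
  calc y i < x i.succ := (hy i).2
    _ ≤ x i'.castSucc := hx.monotone (Fin.succ_le_castSucc_iff.2 hii')
    _ < y i' := (hy i').1

theorem hasDerivAt_sum_mul_rpow {ι : Type*} [Fintype ι] (a q : ι → ℝ) {t : ℝ} (ht : t ≠ 0) :
    HasDerivAt (fun t => ∑ j, a j * t ^ q j) (∑ j, a j * (q j * t ^ (q j - 1))) t :=
  HasDerivAt.fun_sum fun j _ => (Real.hasDerivAt_rpow_const (Or.inl ht)).const_mul (a j)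

theorem eq_zero_of_sum_mul_rpow_eq_zero_of_strictMono {k : ℕ} {q : Fin k → ℝ} (hq : Injective q)
    {x : Fin k → ℝ} (hx : StrictMono x) (hxpos : ∀ i, 0 < x i) {a : Fin k → ℝ}
    (h : ∀ i, ∑ j, a j * x i ^ q j = 0) : a = 0 := by
  induction k with
  | zero => exact Subsingleton.elim _ _
  | succ k ih =>
    set Q : Fin (k + 1) → ℝ := fun j => q j - q 0 with hQ
    have hQx : ∀ i, ∑ j, a j * x i ^ Q j = 0 := fun i => by
      simp_rw [hQ, Real.rpow_sub (hxpos i), mul_div_assoc', ← Finset.sum_div, h i, zero_div]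
    obtain ⟨y, hy, hy0, hy'⟩ := exists_strictMono_deriv_eq_zero hx
      (fun t ht => hasDerivAt_sum_mul_rpow a Q ((hxpos 0).trans_le ht).ne') hQx
    have htail : (fun j : Fin k => a j.succ * Q j.succ) = 0 := by
      refine ih (q := fun j => Q j.succ - 1) ?_ hy (fun i => (hxpos 0).trans (hy0 i)) fun i => ?_
      · intro j j' hjj'
        exact Fin.succ_injective _ (hq (by simpa [hQ] using hjj'))
      · simpa [Fin.sum_univ_succ, hQ, mul_assoc] using hy' i
    have hsucc : ∀ j : Fin k, a j.succ = 0 := fun j =>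
      (mul_eq_zero.1 (congrFun htail j)).resolve_right
        (sub_ne_zero.2 (hq.ne (Fin.succ_ne_zero j)))
    have h0 : a 0 = 0 := by
      have := h 0
      simp only [Fin.sum_univ_succ, hsucc, zero_mul, Finset.sum_const_zero, add_zero] at this
      exact (mul_eq_zero.1 this).resolve_right (Real.rpow_pos_of_pos (hxpos 0) _).ne'
    ext j
    cases j using Fin.cases with
    | zero => exact h0
    | succ j => exact hsucc j

theorem eq_zero_of_sum_mul_rpow_eq_zero {k : ℕ} {q : Fin k → ℝ} (hq : Injective q)
    {x : Fin k → ℝ} (hx : Injective x) (hxpos : ∀ i, 0 < x i) {a : Fin k → ℝ}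
    (h : ∀ i, ∑ j, a j * x i ^ q j = 0) : a = 0 :=
  eq_zero_of_sum_mul_rpow_eq_zero_of_strictMono hq
    ((Tuple.monotone_sort x).strictMono_of_injective (hx.comp (Tuple.sort x).injective))
    (fun _ => hxpos _) (fun _ => h _)

theorem Matrix.det_of_rpow_ne_zero {k : ℕ} {x q : Fin k → ℝ} (hx : Injective x)
    (hxpos : ∀ i, 0 < x i) (hq : Injective q) : (Matrix.of fun i j => x i ^ q j).det ≠ 0 := by
  intro hdet
  obtain ⟨a, ha, hxa⟩ := Matrix.exists_mulVec_eq_zero_iff.2 hdet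
  refine ha (eq_zero_of_sum_mul_rpow_eq_zero hq hx hxpos fun i => ?_)
  simpa [Matrix.mulVec, dotProduct, mul_comm] using congrFun hxa i

theorem power_matrix_all_submatrices_nonsingular_general (n : ℕ)
    (p : Fin n → ℝ) (hinj : Function.Injective p)
    (M : Matrix (Fin n) (Fin n) ℝ)
    (hM : ∀ i j, M i j = ((i : ℕ) + 1 : ℝ) ^ (p j)) :
    ∀ k : ℕ, 1 ≤ k → ∀ (r : Fin k → Fin n) (c : Fin k → Fin n),
      Function.Injective r → Function.Injective c →
      IsUnit (M.submatrix r c).det := by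
  intro k _ r c hr hc
  have hsub : M.submatrix r c = Matrix.of fun i j => ((r i : ℕ) + 1 : ℝ) ^ p (c j) := by
    ext i j
    exact hM _ _
  rw [isUnit_iff_ne_zero, hsub]
  refine Matrix.det_of_rpow_ne_zero (fun i i' h => hr ?_) (fun i => by positivity) (hinj.comp hc)
  simpa [Fin.val_inj] using h

/-- If `p₁, …, pₙ` are distinct positive reals and `M` is the n×n real matrix
with `M i j = i ^ (p j)` (rows indexed by `1, …, n`), then every square
submatrix of `M` is nonsingular. -/
theorem power_matrix_all_submatrices_nonsingular (n : ℕ)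
    (p : Fin n → ℝ) (hpos : ∀ j, 0 < p j) (hinj : Function.Injective p)
    (M : Matrix (Fin n) (Fin n) ℝ)
    (hM : ∀ i j, M i j = ((i : ℕ) + 1 : ℝ) ^ (p j)) :
    ∀ k : ℕ, 1 ≤ k → ∀ (r : Fin k → Fin n) (c : Fin k → Fin n),
      Function.Injective r → Function.Injective c →
      IsUnit (M.submatrix r c).det :=
  power_matrix_all_submatrices_nonsingular_general n p hinj M hM
end

section
/- Let M be the m×n matrix over ℚ with entries M_{ij} = i^{j−1} for 1 ≤ i ≤ m, 1 ≤ j ≤ n (a Vandermonde matrix with nodes 1,2,…,m). Then every square submatrix of M is nonsingular: for every k ≥ 1 and every choice of row indices R ⊆ {1,…,m} and column indices C ⊆ {1,…,n} with |R| = |C| = k, the submatrix M(R,C) is invertible. -/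
/-!
A vanishing linear combination `v` of the columns `(x i ^ e j)_i` is a nonzero polynomial
`∑ v j X ^ e j` with at most `k` monomials that has the `k` distinct positive roots `x i`.
By Descartes' rule of signs it has at most as many positive roots as sign changes among its
coefficients, hence fewer than `k`.
-/

open Finset Polynomial

namespace Polynomial

theorem signVariations_le_card_support_sub_one {R : Type*} [Semiring R] [LinearOrder R]
    (P : R[X]) : signVariations P ≤ #P.support - 1 := by
  induction hP : #P.support generalizing P with
  | zero => simp [card_support_eq_zero.mp hP]
  | succ n ih =>
    rcases eq_or_ne P.eraseLead 0 with hlead | hlead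
    · rw [← eraseLead_add_monomial_natDegree_leadingCoeff P, hlead, zero_add,
        signVariations_monomial]
      exact Nat.zero_le _
    · have herase := ih P.eraseLead (card_support_eraseLead' hP)
      have hpos : 0 < #P.eraseLead.support := card_pos.mpr (support_nonempty.mpr hlead)
      have hstep := signVariations_le_eraseLead_succ P
      rw [card_support_eraseLead' hP] at hpos
      omega

variable {R : Type*} [CommRing R] [LinearOrder R] [IsStrictOrderedRing R]

theorem card_pos_roots_lt_card_support {P : R[X]} (hP : P ≠ 0) {t : Finset R}
    (ht : ∀ x ∈ t, 0 < x ∧ P.IsRoot x) : #t < #P.support := by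
  have hsub : t ⊆ (P.roots.filter (0 < ·)).toFinset := fun x hx => by
    simpa [(ht x hx).1, mem_roots hP] using (ht x hx).2
  have hsupp : 0 < #P.support := card_pos.mpr (support_nonempty.mpr hP)
  calc #t ≤ (P.roots.filter (0 < ·)).card :=
        (card_le_card hsub).trans (Multiset.toFinset_card_le _)
    _ = P.roots.countP (0 < ·) := (Multiset.countP_eq_card_filter _ _).symm
    _ ≤ signVariations P := roots_countP_pos_le_signVariations P
    _ ≤ #P.support - 1 := signVariations_le_card_support_sub_one P
    _ < #P.support := Nat.sub_lt hsupp one_pos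

end Polynomial

namespace Matrix

variable {K : Type*} [Field K] [LinearOrder K] [IsStrictOrderedRing K]
  {ι : Type*} [Fintype ι] [DecidableEq ι]

theorem det_of_pow_ne_zero_of_pos {x : ι → K} {e : ι → ℕ} (hx : Function.Injective x)
    (hpos : ∀ i, 0 < x i) (he : Function.Injective e) :
    (of fun i j => x i ^ e j).det ≠ 0 := by
  intro hdet
  obtain ⟨v, hv, hker⟩ := exists_mulVec_eq_zero_iff.mpr hdet
  set P : K[X] := ∑ j, monomial (e j) (v j) with hPdef
  have hcoeff : ∀ j, P.coeff (e j) = v j := fun j => by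
    rw [hPdef, finsetSum_coeff, Finset.sum_eq_single j (fun j' _ hj' => by
      rw [coeff_monomial, if_neg (he.ne hj')]) (by simp)]
    simp
  have hP : P ≠ 0 := fun h0 =>
    hv (funext fun j => by rw [← hcoeff, h0, coeff_zero, Pi.zero_apply])
  have hsupp : P.support ⊆ univ.image e := fun d hd => by
    by_contra hnot
    refine mem_support_iff.mp hd ?_
    rw [hPdef, finsetSum_coeff]
    refine Finset.sum_eq_zero fun j _ => ?_
    rw [coeff_monomial, if_neg]
    exact fun h => hnot (h ▸ mem_image_of_mem e (mem_univ j))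
  have hroots : ∀ y ∈ univ.image x, 0 < y ∧ P.IsRoot y := by
    simp only [mem_image, mem_univ, true_and, forall_exists_index, forall_apply_eq_imp_iff]
    refine fun i => ⟨hpos i, ?_⟩
    simpa [hPdef, eval_finsetSum, mulVec, dotProduct, mul_comm] using congrFun hker i
  have hlt := card_pos_roots_lt_card_support hP hroots
  rw [card_image_of_injective _ hx] at hlt
  exact hlt.not_ge ((card_le_card hsupp).trans card_image_le)

end Matrix

/-- Every square submatrix of the m×n Vandermonde matrix over ℚ with entries
`M i j = i ^ (j - 1)` (nodes `1, 2, …, m`) is nonsingular. -/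
theorem vandermonde_all_submatrices_nonsingular (m n : ℕ)
    (M : Matrix (Fin m) (Fin n) ℚ)
    (hM : ∀ i j, M i j = ((i : ℕ) + 1 : ℚ) ^ (j : ℕ)) :
    ∀ k : ℕ, 1 ≤ k → ∀ (r : Fin k → Fin m) (c : Fin k → Fin n),
      Function.Injective r → Function.Injective c →
      IsUnit (M.submatrix r c).det := by
  intro k _ r c hr hc
  have hnodes : Function.Injective fun i => ((r i : ℕ) + 1 : ℚ) := fun i j h =>
    hr (Fin.ext (by exact_mod_cast add_right_cancel h))
  have hsub : M.submatrix r c = Matrix.of fun i j => ((r i : ℕ) + 1 : ℚ) ^ (c j : ℕ) :=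
    Matrix.ext fun i j => hM (r i) (c j)
  rw [hsub, isUnit_iff_ne_zero]
  exact Matrix.det_of_pow_ne_zero_of_pos hnodes (fun i => by positivity)
    (Fin.val_injective.comp hc)
end
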